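/- Impossibility of local thermal equilibrium in non-canonical steady states. Let Ω_B : (0,∞) → [0,∞) be measurable with Z_B(β) := ∫₀^∞ Ω_B(E) exp(−βE) dE finite and strictly positive for all β > 0. Let ν be a Borel measure on (0,∞) with ρ(E) := ∫₀^∞ exp(−βE) dν(β) finite for all E > 0. If there exist constants C > 0 and β₀ > 0 such that for every ε > 0, ∫₀^∞ Ω_B(E′) ρ(ε + E′) dE′ = C · exp(−β₀ ε), then ν = (C/Z_B(β₀)) · δ_{β₀} (a point mass at β₀), and hence ρ(E) = (C/Z_B(β₀)) · exp(−β₀ E) for all E > 0. In particular, if a subsystem of a superstatistical steady state is canonical at inverse temperature β₀, the whole steady state is canonical at β₀; a genuinely non-canonical superstatistical steady state admits no subsystem in local thermal equilibrium. -/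

import Mathlib

/-!
By Tonelli, the marginal ensemble `ε ↦ ∫ Ω_B(E') ρ(ε + E') dE'` is the Laplace transform of the
measure `Z_B • ν`; Tonelli applies because `ρ(1) < ∞` makes `ν` σ-finite. So `Z_B • ν` has the
Laplace transform of `C δ_{β₀}`, and under it `X = exp (β₀ - β)` has its first three moments equal
to `C`. Hence `∫ X (X - 1)² d(Z_B • ν) = C - 2C + C = 0`, which forces `β = β₀` almost everywhere.
As `Z_B` is positive and finite on `(0, ∞)`, `ν` is then the point mass `C / Z_B(β₀) • δ_{β₀}`.
-/

open MeasureTheory Set ENNReal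

noncomputable def laplaceTransform (μ : Measure ℝ) (E : ℝ) : ℝ≥0∞ :=
  ∫⁻ β, ENNReal.ofReal (Real.exp (-β * E)) ∂μ

noncomputable def partitionFunction (m : Measure ℝ) (Ω : ℝ → ℝ) (β : ℝ) : ℝ≥0∞ :=
  ∫⁻ E, ENNReal.ofReal (Ω E * Real.exp (-β * E)) ∂m

section

variable {α : Type*} [MeasurableSpace α]

lemma sigmaFinite_of_lintegral_ne_top {μ : Measure α} {f : α → ℝ≥0∞} (hf : Measurable f)
    (hf0 : ∀ x, f x ≠ 0) (hint : ∫⁻ x, f x ∂μ ≠ ⊤) : SigmaFinite μ := by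
  have := isFiniteMeasure_withDensity hint
  have := SigmaFinite.withDensity_of_ne_top' (μ := μ.withDensity f)
    (f := fun x ↦ (f x)⁻¹) fun x ↦ ENNReal.inv_ne_top.2 (hf0 x)
  rwa [withDensity_inv_same hf (ae_of_all _ hf0) (ae_lt_top hf hint |>.mono fun _ ↦ ne_of_lt)]
    at this

lemma eq_smul_dirac_of_ae_eq [MeasurableSingletonClass α] {μ : Measure α} {a : α}
    (h : ∀ᵐ x ∂μ, x = a) : μ = μ {a} • Measure.dirac a := by
  rw [← Measure.restrict_singleton, Measure.restrict_eq_self_of_ae_mem (s := {a}) h]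

lemma eq_smul_dirac_of_withDensity_eq [MeasurableSingletonClass α] {ν : Measure α}
    {f : α → ℝ≥0∞} {a : α} {c : ℝ≥0∞} (hf : AEMeasurable f ν) (hf0 : ∀ᵐ x ∂ν, f x ≠ 0)
    (ha0 : f a ≠ 0) (hatop : f a ≠ ⊤) (h : ν.withDensity f = c • Measure.dirac a) :
    ν = (c / f a) • Measure.dirac a := by
  have hae : ∀ᵐ x ∂ν, x = a := (withDensity_absolutelyContinuous' hf hf0).ae_le <| by
    rw [h]; exact Measure.ae_smul_measure (by simp [ae_dirac_eq]) c
  have hmass : f a * ν {a} = c := by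
    simpa [withDensity_apply _ (measurableSet_singleton a), mul_comm] using congrArg (· {a}) h
  rw [eq_smul_dirac_of_ae_eq hae, (ENNReal.eq_div_iff ha0 hatop).2 hmass]

lemma ae_eq_one_of_lintegral_pow_eq {μ : Measure α} {f : α → ℝ} (hf : Measurable f)
    (hf0 : ∀ x, 0 < f x) {c : ℝ≥0∞} (hc : c ≠ ⊤) (h1 : ∫⁻ x, ENNReal.ofReal (f x) ∂μ = c)
    (h2 : ∫⁻ x, ENNReal.ofReal (f x ^ 2) ∂μ = c) (h3 : ∫⁻ x, ENNReal.ofReal (f x ^ 3) ∂μ = c) :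
    ∀ᵐ x ∂μ, f x = 1 := by
  -- `∫ f (f - 1)² dμ = ∫ f³ - 2 ∫ f² + ∫ f = 0`, written without subtraction
  have hpointwise : ∀ x, ENNReal.ofReal (f x * (f x - 1) ^ 2) + 2 * ENNReal.ofReal (f x ^ 2)
      = ENNReal.ofReal (f x ^ 3) + ENNReal.ofReal (f x) := fun x ↦ by
    have := (hf0 x).le
    rw [← ofReal_ofNat, ← ofReal_mul (by norm_num), ← ofReal_add (by positivity) (by positivity),
      ← ofReal_add (by positivity) this]
    ring_nf
  have hzero : ∫⁻ x, ENNReal.ofReal (f x * (f x - 1) ^ 2) ∂μ = 0 := by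
    have := congrArg (∫⁻ x, · x ∂μ) (funext hpointwise)
    simp only at this
    rw [lintegral_add_left (by fun_prop), lintegral_const_mul _ (by fun_prop),
      lintegral_add_left (by fun_prop), h1, h2, h3, two_mul] at this
    exact (ENNReal.add_left_inj (by finiteness)).1 (this.trans (zero_add _).symm)
  filter_upwards [(lintegral_eq_zero_iff (by fun_prop)).1 hzero] with x hx
  have hsq : (f x - 1) ^ 2 = 0 := le_antisymm
    (nonpos_of_mul_nonpos_right (ofReal_eq_zero.1 hx) (hf0 x)) (sq_nonneg _)
  linarith [pow_eq_zero_iff two_ne_zero |>.1 hsq]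

end

lemma laplaceTransform_smul_dirac (c : ℝ≥0∞) (a E : ℝ) :
    laplaceTransform (c • Measure.dirac a) E = c * ENNReal.ofReal (Real.exp (-a * E)) := by
  simp [laplaceTransform, lintegral_smul_measure]

lemma sigmaFinite_of_laplaceTransform_ne_top {μ : Measure ℝ} {E : ℝ}
    (h : laplaceTransform μ E ≠ ⊤) : SigmaFinite μ :=
  sigmaFinite_of_lintegral_ne_top (by fun_prop) (fun _ ↦ (ofReal_pos.2 (Real.exp_pos _)).ne') h

lemma eq_smul_dirac_of_laplaceTransform_eq {μ : Measure ℝ} {c : ℝ≥0∞} (hc : c ≠ ⊤) {β₀ : ℝ}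
    (h : ∀ ε > 0, laplaceTransform μ ε = c * ENNReal.ofReal (Real.exp (-β₀ * ε))) :
    μ = c • Measure.dirac β₀ := by
  have hmoment : ∀ n : ℕ, 0 < n →
      ∫⁻ β, ENNReal.ofReal (Real.exp (β₀ - β) ^ n) ∂μ = c := fun n hn ↦ by
    have hexp : ∀ β, ENNReal.ofReal (Real.exp (β₀ - β) ^ n)
        = ENNReal.ofReal (Real.exp (β₀ * n)) * ENNReal.ofReal (Real.exp (-β * n)) := fun β ↦ by
      rw [← ofReal_mul (Real.exp_nonneg _), ← Real.exp_add, ← Real.exp_nat_mul]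
      ring_nf
    rw [lintegral_congr hexp, lintegral_const_mul' _ _ ofReal_ne_top]
    change _ * laplaceTransform μ n = c
    rw [h n (by positivity), mul_left_comm, ← ofReal_mul (Real.exp_nonneg _), ← Real.exp_add]
    simp
  have hae : ∀ᵐ β ∂μ, β = β₀ := by
    filter_upwards [ae_eq_one_of_lintegral_pow_eq (f := fun β ↦ Real.exp (β₀ - β)) (by fun_prop)
      (fun _ ↦ Real.exp_pos _) hc (by simpa using hmoment 1 one_pos) (hmoment 2 two_pos)
      (hmoment 3 three_pos)] with β hβ
    rw [Real.exp_eq_one_iff] at hβ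
    linarith
  have hμ := eq_smul_dirac_of_ae_eq hae
  have hmass : μ {β₀} = c := by
    have := h 1 one_pos
    rw [hμ, laplaceTransform_smul_dirac] at this
    exact (ENNReal.mul_left_inj (ofReal_pos.2 (Real.exp_pos _)).ne' ofReal_ne_top).1 this
  rw [hμ, hmass]

lemma measurable_partitionFunction {m : Measure ℝ} [SFinite m] {Ω : ℝ → ℝ} (hΩ : Measurable Ω) :
    Measurable (partitionFunction m Ω) :=
  Measurable.lintegral_prod_right'
    (f := fun p : ℝ × ℝ ↦ ENNReal.ofReal (Ω p.2 * Real.exp (-p.1 * p.2))) (by fun_prop)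

lemma laplaceTransform_withDensity_partitionFunction {m ν : Measure ℝ} [SFinite m] [SFinite ν]
    {Ω : ℝ → ℝ} (hΩ : Measurable Ω) (hΩ0 : ∀ E, 0 ≤ Ω E) (ε : ℝ) :
    laplaceTransform (ν.withDensity (partitionFunction m Ω)) ε
      = ∫⁻ E, ENNReal.ofReal (Ω E) * laplaceTransform ν (ε + E) ∂m := by
  have hexp : ∀ β E, ENNReal.ofReal (Ω E * Real.exp (-β * E)) * ENNReal.ofReal (Real.exp (-β * ε))
      = ENNReal.ofReal (Ω E) * ENNReal.ofReal (Real.exp (-β * (ε + E))) := fun β E ↦ by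
    rw [← ofReal_mul (hΩ0 E), ← ofReal_mul (by have := hΩ0 E; positivity), mul_add, Real.exp_add]
    ring_nf
  calc laplaceTransform (ν.withDensity (partitionFunction m Ω)) ε
      = ∫⁻ β, ∫⁻ E, ENNReal.ofReal (Ω E) * ENNReal.ofReal (Real.exp (-β * (ε + E))) ∂m ∂ν := by
        rw [laplaceTransform, lintegral_withDensity_eq_lintegral_mul _
          (measurable_partitionFunction hΩ) (by fun_prop)]
        refine lintegral_congr fun β ↦ ?_
        simp only [Pi.mul_apply, partitionFunction, ← lintegral_mul_const' _ _ ofReal_ne_top, hexp]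
    _ = ∫⁻ E, ∫⁻ β, ENNReal.ofReal (Ω E) * ENNReal.ofReal (Real.exp (-β * (ε + E))) ∂ν ∂m :=
        lintegral_lintegral_swap (by fun_prop)
    _ = ∫⁻ E, ENNReal.ofReal (Ω E) * laplaceTransform ν (ε + E) ∂m :=
        lintegral_congr fun E ↦ lintegral_const_mul' _ _ ofReal_ne_top

theorem no_LTE_in_noncanonical_steady_states_general
    (ΩB : ℝ → ℝ) (hΩB : Measurable ΩB) (hΩB0 : ∀ E, 0 ≤ ΩB E)
    (ZB : ℝ → ℝ≥0∞)
    (hZB : ∀ β, ZB β = ∫⁻ E in Ioi (0:ℝ), ENNReal.ofReal (ΩB E * Real.exp (-β * E)))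
    (hZBpos : ∀ β > (0:ℝ), 0 < ZB β) (hZBfin : ∀ β > (0:ℝ), ZB β < ⊤)
    (ν : Measure ℝ) (hν : ν (Iic 0) = 0)
    (ρ : ℝ → ℝ≥0∞)
    (hρ : ∀ E, ρ E = ∫⁻ β, ENNReal.ofReal (Real.exp (-β * E)) ∂ν)
    (hρfin : ∀ E > (0:ℝ), ρ E < ⊤)
    (C β₀ : ℝ) (hβ₀ : 0 < β₀)
    (hLTE : ∀ ε > (0:ℝ),
      ∫⁻ E' in Ioi (0:ℝ), ENNReal.ofReal (ΩB E') * ρ (ε + E')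
        = ENNReal.ofReal (C * Real.exp (-β₀ * ε))) :
    ν = (ENNReal.ofReal C / ZB β₀) • Measure.dirac β₀
    ∧ ∀ E > (0:ℝ),
        ρ E = (ENNReal.ofReal C / ZB β₀) * ENNReal.ofReal (Real.exp (-β₀ * E)) := by
  have hZB' : ZB = partitionFunction (volume.restrict (Ioi 0)) ΩB := funext hZB
  obtain rfl : ρ = laplaceTransform ν := funext hρ
  have : SigmaFinite ν := sigmaFinite_of_laplaceTransform_ne_top (hρfin 1 one_pos).ne
  have hZBν : ν.withDensity ZB = ENNReal.ofReal C • Measure.dirac β₀ :=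
    eq_smul_dirac_of_laplaceTransform_eq ofReal_ne_top fun ε hε ↦ by
      rw [hZB', laplaceTransform_withDensity_partitionFunction hΩB hΩB0, hLTE ε hε,
        ofReal_mul' (Real.exp_nonneg _)]
  have hZB0 : ∀ᵐ β ∂ν, ZB β ≠ 0 := by
    filter_upwards [measure_eq_zero_iff_ae_notMem.1 hν] with β hβ
    exact (hZBpos β (not_le.1 hβ)).ne'
  have hZBmeas : Measurable ZB := hZB' ▸ measurable_partitionFunction hΩB
  have hν_eq := eq_smul_dirac_of_withDensity_eq hZBmeas.aemeasurable hZB0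
    (hZBpos β₀ hβ₀).ne' (hZBfin β₀ hβ₀).ne hZBν
  exact ⟨hν_eq, fun E _ ↦ by rw [hν_eq, laplaceTransform_smul_dirac]⟩

/-- **Impossibility of local thermal equilibrium in non-canonical steady states.**
Let `Ω_B` be a density of states with partition function `Z_B(β)` finite and strictly
positive for all `β > 0`, and let `ν` be a Borel measure on `(0,∞)` (a measure on `ℝ`
vanishing on `(-∞,0]`) whose Laplace transform `ρ(E) = ∫ exp(-βE) dν(β)` is finite for
all `E > 0`. If the marginal ensemble `ε ↦ ∫₀^∞ Ω_B(E') ρ(ε+E') dE'` is canonical,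
i.e. equal to `C · exp(-β₀ ε)` for some `C > 0`, `β₀ > 0`, then `ν` is the point mass
`(C/Z_B(β₀)) · δ_{β₀}`, and hence `ρ(E) = (C/Z_B(β₀)) · exp(-β₀ E)` for all `E > 0`:
the whole steady state is canonical at inverse temperature `β₀`. -/
theorem no_LTE_in_noncanonical_steady_states
    (ΩB : ℝ → ℝ) (hΩB : Measurable ΩB) (hΩB0 : ∀ E, 0 ≤ ΩB E)
    (ZB : ℝ → ℝ≥0∞)
    (hZB : ∀ β, ZB β = ∫⁻ E in Ioi (0:ℝ), ENNReal.ofReal (ΩB E * Real.exp (-β * E)))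
    (hZBpos : ∀ β > (0:ℝ), 0 < ZB β) (hZBfin : ∀ β > (0:ℝ), ZB β < ⊤)
    (ν : Measure ℝ) (hν : ν (Iic 0) = 0)
    (ρ : ℝ → ℝ≥0∞)
    (hρ : ∀ E, ρ E = ∫⁻ β, ENNReal.ofReal (Real.exp (-β * E)) ∂ν)
    (hρfin : ∀ E > (0:ℝ), ρ E < ⊤)
    (C β₀ : ℝ) (hC : 0 < C) (hβ₀ : 0 < β₀)
    (hLTE : ∀ ε > (0:ℝ),
      ∫⁻ E' in Ioi (0:ℝ), ENNReal.ofReal (ΩB E') * ρ (ε + E')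
        = ENNReal.ofReal (C * Real.exp (-β₀ * ε))) :
    ν = (ENNReal.ofReal C / ZB β₀) • Measure.dirac β₀
    ∧ ∀ E > (0:ℝ),
        ρ E = (ENNReal.ofReal C / ZB β₀) * ENNReal.ofReal (Real.exp (-β₀ * E)) :=
  no_LTE_in_noncanonical_steady_states_general ΩB hΩB hΩB0 ZB hZB hZBpos hZBfin ν hν ρ hρ hρfin C β₀
    hβ₀ hLTE
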